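/- arXiv:2603.29214 — 4 statements merged into one kernel-verified Lean document; each statement's English description precedes it below -/
import Mathlib

section
/- Let f(z) = -z + sat(μz + kz² + c) with 0 < μ < 1, k > 0, c ≥ 0 constant, z* := (1-μ)/(2k) < 1, and suppose c > (1-μ)²/(4k) + ε for some ε > 0. Then the solution of ż = f(z) with z(0) ∈ [0,1] satisfies z(t) → 1 as t → ∞. -/
open Filter

/-- Piecewise-linear saturation onto [0,1]. -/
noncomputable def sat (x : ℝ) : ℝ := max 0 (min 1 x)

lemma sat_nonneg (x : ℝ) : 0 ≤ sat x := le_max_left _ _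

lemma sat_le_one (x : ℝ) : sat x ≤ 1 := max_le zero_le_one (min_le_left _ _)

/-- for the scalar NOD equation ż = -z + sat(μz + kz² + c) with
0 < μ < 1, k > 0, z* = (1-μ)/(2k) < 1, and constant input
c > (1-μ)²/(4k) + ε with ε > 0, every solution with z(0) ∈ [0,1] converges
to 1. -/
theorem scalar_nod_superthreshold_converges (μ k c ε : ℝ)
    (hμ0 : 0 < μ) (hμ1 : μ < 1) (hk : 0 < k) (hc0 : 0 ≤ c) (hε : 0 < ε)
    (hzs : (1 - μ) / (2 * k) < 1) (hc : c > (1 - μ)^2 / (4 * k) + ε)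
    (z : ℝ → ℝ) (hz0 : z 0 ∈ Set.Icc (0:ℝ) 1)
    (hode : ∀ t : ℝ, HasDerivAt z (-z t + sat (μ * z t + k * (z t)^2 + c)) t) :
    Tendsto z atTop (nhds 1) := by
  obtain ⟨hz00, hz01⟩ := hz0
  set d : ℝ → ℝ := fun t => -z t + sat (μ * z t + k * (z t)^2 + c) with hd
  have hzdiff : Differentiable ℝ z := fun t => (hode t).differentiableAt
  have hzcont : Continuous z := hzdiff.continuous
  -- u t = z t * exp t is monotone (since z' ≥ -z)
  have hu : Monotone (fun t => z t * Real.exp t) := by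
    apply monotone_of_deriv_nonneg
    · exact hzdiff.mul Real.differentiable_exp
    · intro t
      have h : HasDerivAt (fun t => z t * Real.exp t)
          (d t * Real.exp t + z t * Real.exp t) t :=
        (hode t).mul (Real.hasDerivAt_exp t)
      rw [h.deriv]
      have h1 : 0 ≤ sat (μ * z t + k * (z t)^2 + c) := sat_nonneg _
      have h2 : (0:ℝ) < Real.exp t := Real.exp_pos t
      simp only [hd]
      nlinarith
  -- w t = (z t - 1) * exp t is antitone (since z' ≤ 1 - z)
  have hw : Antitone (fun t => (z t - 1) * Real.exp t) := by
    apply antitone_of_deriv_nonpos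
    · exact (hzdiff.sub_const 1).mul Real.differentiable_exp
    · intro t
      have h : HasDerivAt (fun t => (z t - 1) * Real.exp t)
          (d t * Real.exp t + (z t - 1) * Real.exp t) t :=
        ((hode t).sub_const 1).mul (Real.hasDerivAt_exp t)
      rw [h.deriv]
      have h1 : sat (μ * z t + k * (z t)^2 + c) ≤ 1 := sat_le_one _
      have h2 : (0:ℝ) < Real.exp t := Real.exp_pos t
      simp only [hd]
      nlinarith
  -- invariance of [0,1] for t ≥ 0
  have hzlo : ∀ t, 0 ≤ t → 0 ≤ z t := by
    intro t ht
    have := hu ht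
    simp only [Real.exp_zero, mul_one] at this
    have h2 : (0:ℝ) < Real.exp t := Real.exp_pos t
    nlinarith
  have hzhi : ∀ t, 0 ≤ t → z t ≤ 1 := by
    intro t ht
    have := hw ht
    simp only [Real.exp_zero, mul_one] at this
    have h2 : (0:ℝ) < Real.exp t := Real.exp_pos t
    nlinarith
  set ε' : ℝ := min ε 1 with hε'
  have hε'0 : 0 < ε' := lt_min hε one_pos
  have hε'1 : ε' ≤ 1 := min_le_right _ _
  have hε'ε : ε' ≤ ε := min_le_left _ _
  -- key differential inequality: for t ≥ 0, d t ≥ ε' * (1 - z t)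
  have hkey : ∀ t, 0 ≤ t → ε' * (1 - z t) ≤ d t := by
    intro t ht
    have h0 := hzlo t ht
    have h1 := hzhi t ht
    have hc4 : (1 - μ)^2 < 4 * k * (c - ε) := by
      have h : (1 - μ)^2 / (4 * k) < c - ε := by linarith
      linarith [(div_lt_iff₀ (by positivity : (0:ℝ) < 4 * k)).mp h]
    have harg : z t + ε ≤ μ * z t + k * (z t)^2 + c := by
      nlinarith [sq_nonneg (2 * k * z t - (1 - μ))]
    have harg' : z t + ε' ≤ μ * z t + k * (z t)^2 + c := by linarith
    have hsat : min 1 (z t + ε') ≤ sat (μ * z t + k * (z t)^2 + c) :=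
      le_max_of_le_right (le_min (min_le_left _ _)
        (le_trans (min_le_right _ _) harg'))
    have hmin : ε' * (1 - z t) ≤ min 1 (z t + ε') - z t := by
      rcases le_total 1 (z t + ε') with h | h
      · rw [min_eq_left h]; nlinarith
      · rw [min_eq_right h]; nlinarith
    simp only [hd]
    linarith
  -- g t = (1 - z t) * exp(ε' t) is antitone on [0,∞)
  have hg : AntitoneOn (fun t => (1 - z t) * Real.exp (ε' * t)) (Set.Ici 0) := by
    apply antitoneOn_of_deriv_nonpos (convex_Ici 0)
    · exact ((continuous_const.sub hzcont).mul
        (Real.continuous_exp.comp (continuous_const.mul continuous_id))).continuousOn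
    · intro t _
      exact ((differentiable_const 1).sub hzdiff).mul
        (Real.differentiable_exp.comp ((differentiable_const ε').mul differentiable_id))
        |>.differentiableAt.differentiableWithinAt
    · intro t htmem
      rw [interior_Ici] at htmem
      have ht : (0:ℝ) ≤ t := le_of_lt htmem
      have hexp : HasDerivAt (fun x => Real.exp (ε' * x))
          (Real.exp (ε' * t) * ε') t := by
        have h1 : HasDerivAt (fun x : ℝ => ε' * x) ε' t := by
          simpa using (hasDerivAt_id t).const_mul ε'
        simpa using h1.exp
      have h : HasDerivAt (fun t => (1 - z t) * Real.exp (ε' * t))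
          ((-d t) * Real.exp (ε' * t) + (1 - z t) * (Real.exp (ε' * t) * ε')) t :=
        (((hasDerivAt_const t (1:ℝ)).sub (hode t)).mul hexp).congr_deriv (by simp only [hd, Pi.sub_apply]; ring)
      rw [h.deriv]
      have h2 : (0:ℝ) < Real.exp (ε' * t) := Real.exp_pos _
      have h3 := hkey t ht
      nlinarith
  -- hence 1 - z t ≤ (1 - z 0) * exp(-ε' t) for t ≥ 0
  have hbound : ∀ t, 0 ≤ t → 1 - (1 - z 0) * Real.exp (-(ε' * t)) ≤ z t := by
    intro t ht
    have := hg (Set.self_mem_Ici) (Set.mem_Ici.mpr ht) ht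
    simp only [mul_zero, Real.exp_zero, mul_one] at this
    have h2 : (0:ℝ) < Real.exp (ε' * t) := Real.exp_pos _
    rw [Real.exp_neg]
    have h4 : 1 - z t ≤ (1 - z 0) * (Real.exp (ε' * t))⁻¹ := by
      rw [← div_eq_mul_inv, le_div_iff₀ h2]
      linarith
    linarith
  -- squeeze
  have hlim : Tendsto (fun t => 1 - (1 - z 0) * Real.exp (-(ε' * t))) atTop (nhds 1) := by
    have h1 : Tendsto (fun t : ℝ => -(ε' * t)) atTop atBot := by
      apply tendsto_neg_atBot_iff.mpr
      exact Tendsto.const_mul_atTop hε'0 tendsto_id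
    have h2 : Tendsto (fun t => (1 - z 0) * Real.exp (-(ε' * t))) atTop (nhds 0) := by
      have := Real.tendsto_exp_atBot.comp h1
      simpa using this.const_mul (1 - z 0)
    simpa using (tendsto_const_nhds : Tendsto (fun _ : ℝ => (1:ℝ)) atTop (nhds 1)).sub h2
  refine tendsto_of_tendsto_of_tendsto_of_le_of_le' hlim tendsto_const_nhds ?_ ?_
  · filter_upwards [eventually_ge_atTop (0:ℝ)] with t ht
    exact hbound t ht
  · filter_upwards [eventually_ge_atTop (0:ℝ)] with t ht
    exact hzhi t ht
end

section
/- Let (A, τ) be an LTM instance and (A, μ, k, γ, 0) its NOD relaxation with k ≥ 1, γk‖τ‖∞ < 1/4, μᵢ = 1 - 2√(γkτᵢ). Then for any seed set I ⊆ [n], C_LTM(I) ⊆ C_NOD(I): every node that activates in the discrete LTM cascade started from I also satisfies zᵢ(t) → 1 in the continuous NOD dynamics started from the indicator of I. -/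
open scoped Classical
open Filter

/-- One step of the persistent Linear Threshold Model. -/
noncomputable def ltmStep {n : ℕ} (A : Matrix (Fin n) (Fin n) ℝ)
    (τ : Fin n → ℝ) (ζ : Fin n → Bool) : Fin n → Bool :=
  fun i => ζ i || decide (τ i < ∑ j, A i j * (if ζ j then (1:ℝ) else 0))

/-- The LTM cascade set from a seed set: nodes eventually active. -/
noncomputable def ltmCascade {n : ℕ} (A : Matrix (Fin n) (Fin n) ℝ)
    (τ : Fin n → ℝ) (I : Finset (Fin n)) : Set (Fin n) :=
  {i | ∃ t : ℕ, (ltmStep A τ)^[t] (fun j => decide (j ∈ I)) i = true}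

lemma sat' (x : ℝ) : sat x ≤ 1 ∧ 0 ≤ sat x ∧ min 1 x ≤ sat x :=
  ⟨max_le zero_le_one (min_le_left _ _), le_max_left _ _, le_max_right _ _⟩

lemma antitoneOn_of_hasDerivAt_nonpos {f d : ℝ → ℝ} (hd : ∀ t, HasDerivAt f (d t) t)
    {D : Set ℝ} (hD : Convex ℝ D) (h : ∀ t ∈ interior D, d t ≤ 0) : AntitoneOn f D :=
  antitoneOn_of_deriv_nonpos hD (fun t _ => (hd t).continuousAt.continuousWithinAt)
    (fun t _ => ((hd t).differentiableAt).differentiableWithinAt)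
    (fun t ht => (hd t).deriv ▸ h t ht)

lemma monotoneOn_of_hasDerivAt_nonneg {f d : ℝ → ℝ} (hd : ∀ t, HasDerivAt f (d t) t)
    {D : Set ℝ} (hD : Convex ℝ D) (h : ∀ t ∈ interior D, 0 ≤ d t) : MonotoneOn f D :=
  monotoneOn_of_deriv_nonneg hD (fun t _ => (hd t).continuousAt.continuousWithinAt)
    (fun t _ => ((hd t).differentiableAt).differentiableWithinAt)
    (fun t ht => (hd t).deriv ▸ h t ht)

lemma tendsto_one_of_deriv_ge {f d : ℝ → ℝ} (hd : ∀ t, HasDerivAt f (d t) t)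
    {T ε : ℝ} (hε : 0 < ε) (hε1 : ε ≤ 1)
    (hbox : ∀ t, T ≤ t → 0 ≤ f t ∧ f t ≤ 1)
    (hlow : ∀ t, T ≤ t → min ε (1 - f t) ≤ d t) :
    Tendsto f atTop (nhds 1) := by
  set g : ℝ → ℝ := fun t => Real.exp (ε * t) * (1 - f t) with hgdef
  have hg' : ∀ t, HasDerivAt g (Real.exp (ε * t) * (ε * (1 - f t) - d t)) t := by
    intro t
    have h1 : HasDerivAt (fun t : ℝ => Real.exp (ε * t)) (ε * Real.exp (ε * t)) t := by
      simpa [mul_comm] using (((hasDerivAt_id t).const_mul ε).exp)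
    have h2 : HasDerivAt (fun t => 1 - f t) (-(d t)) t := by
      exact ((hasDerivAt_const t 1).sub (hd t)).congr_deriv (zero_sub _)
    have := h1.mul h2
    exact this.congr_deriv (by ring)
  have hanti : AntitoneOn g (Set.Ici T) := by
    apply antitoneOn_of_hasDerivAt_nonpos hg' (convex_Ici T)
    intro t ht
    rw [interior_Ici] at ht
    obtain ⟨hb0, hb1⟩ := hbox t ht.le
    have hl := hlow t ht.le
    have hme : ε * (1 - f t) ≤ min ε (1 - f t) := by
      rcases le_total ε (1 - f t) with h | h
      · rw [min_eq_left h]; nlinarith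
      · rw [min_eq_right h]; nlinarith
    have : ε * (1 - f t) - d t ≤ 0 := by linarith
    exact mul_nonpos_of_nonneg_of_nonpos (Real.exp_pos _).le this
  have hbound : ∀ t, T ≤ t → 1 - Real.exp (-(ε * t)) * g T ≤ f t := by
    intro t ht
    have h1 : g t ≤ g T := hanti Set.self_mem_Ici ht ht
    have h2 : 1 - f t = Real.exp (-(ε * t)) * g t := by
      rw [hgdef, Real.exp_neg]
      field_simp
    nlinarith [Real.exp_pos (-(ε * t)), mul_le_mul_of_nonneg_left h1 (Real.exp_pos (-(ε * t))).le]
  have hlim : Tendsto (fun t => 1 - Real.exp (-(ε * t)) * g T) atTop (nhds 1) := by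
    have h1 : Tendsto (fun t : ℝ => ε * t) atTop atTop :=
      Tendsto.const_mul_atTop hε tendsto_id
    have h2 : Tendsto (fun t : ℝ => Real.exp (-(ε * t))) atTop (nhds 0) :=
      Real.tendsto_exp_atBot.comp (tendsto_neg_atBot_iff.mpr h1)
    have := (tendsto_const_nhds (x := (1:ℝ)) (f := atTop)).sub (h2.mul_const (g T))
    simpa using this
  apply tendsto_of_tendsto_of_tendsto_of_le_of_le' hlim tendsto_const_nhds
  · filter_upwards [eventually_ge_atTop T] with t ht using hbound t ht
  · filter_upwards [eventually_ge_atTop T] with t ht using (hbox t ht).2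

lemma stay_nonpos {f d : ℝ → ℝ} (hd : ∀ t, HasDerivAt f (d t) t)
    {δ : ℝ} (hδ : 0 < δ) (hf0 : f 0 ≤ 0)
    (hkey : ∀ t, 0 ≤ t → f t ≤ δ → d t ≤ 0) :
    ∀ t, 0 ≤ t → f t ≤ 0 := by
  have hcont : Continuous f := by
    rw [continuous_iff_continuousAt]; exact fun t => (hd t).differentiableAt.continuousAt
  have hlt : ∀ t, 0 ≤ t → f t < δ := by
    by_contra h
    push_neg at h
    obtain ⟨t1, ht1, ht1'⟩ := h
    set S : Set ℝ := {t | 0 ≤ t ∧ δ ≤ f t} with hS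
    have hSne : S.Nonempty := ⟨t1, ht1, ht1'⟩
    have hSbd : BddBelow S := ⟨0, fun t ht => ht.1⟩
    have hScl : IsClosed S := by
      have hEq : S = Set.Ici 0 ∩ f ⁻¹' Set.Ici δ := by
        ext t; simp [hS, Set.mem_Ici, Set.mem_preimage]
      rw [hEq]
      exact isClosed_Ici.inter (isClosed_Ici.preimage hcont)
    set t0 := sInf S with ht0def
    have ht0S : t0 ∈ S := hScl.csInf_mem hSne hSbd
    have ht0pos : 0 < t0 := by
      rcases ht0S.1.lt_or_eq with h | h
      · exact h
      · exfalso; have := ht0S.2; rw [← h] at this; linarith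
    have hbefore : ∀ s, 0 ≤ s → s < t0 → f s < δ := by
      intro s hs hst
      by_contra hc
      push_neg at hc
      exact absurd (csInf_le hSbd ⟨hs, hc⟩) (not_le.2 hst)
    have hmono : AntitoneOn f (Set.Icc 0 t0) := by
      apply antitoneOn_of_hasDerivAt_nonpos hd (convex_Icc _ _)
      intro s hs
      rw [interior_Icc] at hs
      exact hkey s hs.1.le (hbefore s hs.1.le hs.2).le
    have := hmono (Set.left_mem_Icc.2 ht0pos.le) (Set.right_mem_Icc.2 ht0pos.le) ht0pos.le
    linarith [ht0S.2]
  have hmono : AntitoneOn f (Set.Ici 0) := by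
    apply antitoneOn_of_hasDerivAt_nonpos hd (convex_Ici 0)
    intro s hs
    rw [interior_Ici] at hs
    exact hkey s hs.le (hlt s hs.le).le
  intro t ht
  calc f t ≤ f 0 := hmono Set.self_mem_Ici ht ht
  _ ≤ 0 := hf0

/-- for the NOD relaxation (k ≥ 1, γk‖τ‖∞ < 1/4,
μᵢ = 1 - 2√(γkτᵢ), no input) of an LTM instance (A, τ), every node in the LTM
cascade set of a seed set I also activates (zᵢ(t) → 1) in the NOD dynamics
started from the indicator of I: C_LTM(I) ⊆ C_NOD(I). -/
theorem ltm_cascade_subset_nod_cascade (n : ℕ) [NeZero n]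
    (A : Matrix (Fin n) (Fin n) ℝ) (τ : Fin n → ℝ)
    (hA : ∀ i j, 0 ≤ A i j) (hdiag : ∀ i, A i i = 0)
    (hirr : ∀ i j, ∃ m : ℕ, 0 < (A ^ m) i j) (hτ : ∀ i, 0 < τ i)
    (k γ : ℝ) (hk : 1 ≤ k) (hγ : 0 < γ)
    (hγk : γ * k * (Finset.univ.sup' Finset.univ_nonempty τ) < 1 / 4)
    (μ : Fin n → ℝ) (hμ : ∀ i, μ i = 1 - 2 * Real.sqrt (γ * k * τ i))
    (I : Finset (Fin n)) (z : ℝ → Fin n → ℝ)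
    (hz0 : ∀ i, z 0 i = if i ∈ I then 1 else 0)
    (hode : ∀ (t : ℝ) (i : Fin n), HasDerivAt (fun s => z s i)
      (-z t i + sat (μ i * z t i + k * (z t i)^2 + γ * ∑ j, A i j * z t j)) t) :
    ∀ i ∈ ltmCascade A τ I, Tendsto (fun t => z t i) atTop (nhds 1) := by
  have hkpos : (0:ℝ) < k := lt_of_lt_of_le one_pos hk
  set r : Fin n → ℝ := fun i => Real.sqrt (γ * k * τ i) with hrdef
  have hγkτ : ∀ i, γ * k * τ i < 1/4 := by
    intro i
    have h1 : τ i ≤ Finset.univ.sup' Finset.univ_nonempty τ :=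
      Finset.le_sup' τ (Finset.mem_univ i)
    nlinarith [mul_pos hγ hkpos]
  have hrpos : ∀ i, 0 < r i := by
    intro i
    exact Real.sqrt_pos.2 (mul_pos (mul_pos hγ hkpos) (hτ i))
  have hrlt : ∀ i, r i < 1/2 := by
    intro i
    have : Real.sqrt (γ * k * τ i) < 1/2 := by
      rw [Real.sqrt_lt' (by norm_num)]
      calc γ * k * τ i < 1/4 := hγkτ i
        _ = (1/2)^2 := by norm_num
    simpa [hrdef] using this
  -- box invariance
  have hbox : ∀ t : ℝ, 0 ≤ t → ∀ i, 0 ≤ z t i ∧ z t i ≤ 1 := by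
    intro t ht i
    have hz0mem : 0 ≤ z 0 i ∧ z 0 i ≤ 1 := by
      rw [hz0 i]; split <;> norm_num
    set u : ℝ → ℝ := fun s =>
      sat (μ i * z s i + k * (z s i)^2 + γ * ∑ j, A i j * z s j) with hu
    have hu01 : ∀ s, 0 ≤ u s ∧ u s ≤ 1 := fun s => ⟨(sat' _).2.1, (sat' _).1⟩
    have hw : ∀ s, HasDerivAt (fun s => Real.exp s * z s i) (Real.exp s * u s) s := by
      intro s
      have := (Real.hasDerivAt_exp s).mul (hode s i)
      exact this.congr_deriv (by rw [hu]; ring)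
    have hwmono : MonotoneOn (fun s => Real.exp s * z s i) (Set.Ici 0) := by
      apply monotoneOn_of_hasDerivAt_nonneg hw (convex_Ici 0)
      intro s _
      exact mul_nonneg (Real.exp_pos s).le (hu01 s).1
    have hv : ∀ s, HasDerivAt (fun s => Real.exp s - Real.exp s * z s i)
        (Real.exp s - Real.exp s * u s) s := fun s => (Real.hasDerivAt_exp s).sub (hw s)
    have hvmono : MonotoneOn (fun s => Real.exp s - Real.exp s * z s i) (Set.Ici 0) := by
      apply monotoneOn_of_hasDerivAt_nonneg hv (convex_Ici 0)
      intro s _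
      have := (hu01 s).2
      nlinarith [Real.exp_pos s]
    have hwlo : Real.exp 0 * z 0 i ≤ Real.exp t * z t i :=
      hwmono Set.self_mem_Ici ht ht
    have hvlo : Real.exp 0 - Real.exp 0 * z 0 i ≤ Real.exp t - Real.exp t * z t i :=
      hvmono Set.self_mem_Ici ht ht
    rw [Real.exp_zero] at hwlo hvlo
    constructor
    · have h0 : 0 ≤ Real.exp t * z t i := by linarith [hz0mem.1]
      exact nonneg_of_mul_nonneg_right (by linarith) (Real.exp_pos t)
    · have h1 : Real.exp t * z t i ≤ Real.exp t := by linarith [hz0mem.2]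
      exact le_of_mul_le_mul_left (by linarith) (Real.exp_pos t)
  -- activation lemma
  have hact : ∀ (i : Fin n) (T ε : ℝ), 0 < ε → ε ≤ 1 → 0 ≤ T →
      (∀ t, T ≤ t → γ * τ i + ε ≤ γ * ∑ j, A i j * z t j) →
      Tendsto (fun t => z t i) atTop (nhds 1) := by
    intro i T ε hε hε1 hT hin
    apply tendsto_one_of_deriv_ge (fun t => hode t i) hε hε1
    · intro t ht
      exact hbox t (hT.trans ht) i
    · intro t ht
      set F := μ i * z t i + k * (z t i)^2 + γ * ∑ j, A i j * z t j with hF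
      have h1 : min 1 F ≤ sat F := (sat' F).2.2
      have h2 : ε ≤ F - z t i := by
        have hsq : 0 ≤ (Real.sqrt k * z t i - Real.sqrt (γ * τ i))^2 := sq_nonneg _
        have e1 : Real.sqrt k ^ 2 = k := Real.sq_sqrt hkpos.le
        have e2 : Real.sqrt (γ * τ i) ^ 2 = γ * τ i := Real.sq_sqrt (mul_pos hγ (hτ i)).le
        have e3 : Real.sqrt k * Real.sqrt (γ * τ i) = r i := by
          rw [hrdef, ← Real.sqrt_mul hkpos.le, show k * (γ * τ i) = γ * k * τ i by ring]
        have hexp : (Real.sqrt k * z t i - Real.sqrt (γ * τ i))^2 =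
            k * (z t i)^2 - 2 * r i * z t i + γ * τ i := by
          linear_combination (z t i)^2 * e1 + e2 - 2 * z t i * e3
        have key : 0 ≤ k * (z t i)^2 - 2 * r i * z t i + γ * τ i := hexp ▸ hsq
        have hμi : μ i = 1 - 2 * r i := hμ i
        rw [hF, hμi]
        nlinarith [hin t ht]
      calc min ε (1 - z t i) = min (1 - z t i) ε := min_comm _ _
        _ ≤ min (1 - z t i) (F - z t i) := min_le_min le_rfl h2
        _ = min 1 F - z t i := by rw [min_sub_sub_right]
        _ ≤ sat F - z t i := by linarith
        _ = -z t i + sat F := by ring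
  -- seed persistence
  have hseed : ∀ i ∈ I, ∀ t : ℝ, 0 ≤ t → z t i = 1 := by
    intro i hi
    set c := k - 2 * r i with hc
    have hcpos : 0 < c := by have := hrlt i; simp only [hc]; linarith
    have hδpos : 0 < c / (2 * k) := by positivity
    set y : ℝ → ℝ := fun t => 1 - z t i with hy
    have hyd : ∀ t, HasDerivAt y
        (-(-z t i + sat (μ i * z t i + k * (z t i)^2 + γ * ∑ j, A i j * z t j))) t := by
      intro t
      exact ((hasDerivAt_const t 1).sub (hode t i)).congr_deriv (by ring)
    have hy0 : y 0 ≤ 0 := by simp [hy, hz0 i, hi]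
    have hkey : ∀ t, 0 ≤ t → y t ≤ c / (2 * k) →
        -(-z t i + sat (μ i * z t i + k * (z t i)^2 + γ * ∑ j, A i j * z t j)) ≤ 0 := by
      intro t ht hyle
      set F := μ i * z t i + k * (z t i)^2 + γ * ∑ j, A i j * z t j with hF
      have h1 : min 1 F ≤ sat F := (sat' F).2.2
      obtain ⟨hb0, hb1⟩ := hbox t ht i
      have hs : 0 ≤ γ * ∑ j, A i j * z t j :=
        mul_nonneg hγ.le (Finset.sum_nonneg fun j _ => mul_nonneg (hA i j) (hbox t ht j).1)
      have hzlarge : k - c/2 ≤ k * z t i := by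
        have := mul_le_mul_of_nonneg_left hyle hkpos.le
        have hkc : k * (c / (2 * k)) = c / 2 := by field_simp
        rw [hkc] at this
        simp only [hy] at this
        nlinarith
      rcases le_total (1:ℝ) F with hcase | hcase
      · rw [min_eq_left hcase] at h1
        linarith
      · rw [min_eq_right hcase] at h1
        have h5 : 0 ≤ z t i * (k * z t i - 2 * r i) := by
          apply mul_nonneg hb0
          have := hrlt i
          simp only [hc] at hzlarge
          linarith
        have hzF : z t i ≤ F := by
          rw [hF, hμ i]
          nlinarith [h5, hs]
        linarith
    have hstay := stay_nonpos hyd hδpos hy0 hkey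
    intro t ht
    have := hstay t ht
    have := (hbox t ht i).2
    simp only [hy] at *
    linarith
  -- main induction
  suffices h : ∀ (m : ℕ) (i : Fin n),
      (ltmStep A τ)^[m] (fun j => decide (j ∈ I)) i = true →
      Tendsto (fun t => z t i) atTop (nhds 1) by
    intro i hi
    obtain ⟨m, hm⟩ := hi
    exact h m i hm
  intro m
  induction m with
  | zero =>
    intro i hi
    simp only [Function.iterate_zero, id_eq, decide_eq_true_eq] at hi
    have hEq : (fun t => z t i) =ᶠ[atTop] fun _ => (1:ℝ) :=
      eventually_atTop.2 ⟨0, fun t ht => hseed i hi t ht⟩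
    exact Tendsto.congr' hEq.symm tendsto_const_nhds
  | succ m ih =>
    intro i hi
    rw [Function.iterate_succ_apply'] at hi
    set ζ := (ltmStep A τ)^[m] (fun j => decide (j ∈ I)) with hζ
    simp only [ltmStep, Bool.or_eq_true, decide_eq_true_eq] at hi
    rcases hi with hi | hi
    · exact ih i hi
    · set J := Finset.univ.filter (fun j => ζ j = true) with hJ
      set S := ∑ j ∈ J, A i j with hSdef
      have hsum : ∑ j, A i j * (if ζ j then (1:ℝ) else 0) = S := by
        rw [hSdef, hJ, Finset.sum_filter]
        exact Finset.sum_congr rfl fun j _ => by by_cases h : ζ j = true <;> simp [h]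
      have hτS : τ i < S := by rw [← hsum]; exact hi
      have htend : Tendsto (fun s => ∑ j ∈ J, A i j * z s j) atTop (nhds S) := by
        have hS1 : S = ∑ j ∈ J, A i j * 1 := by simp [hSdef]
        rw [hS1]
        exact tendsto_finset_sum J fun j hj =>
          Tendsto.const_mul _ (ih j (by simpa [hJ] using (Finset.mem_filter.1 hj).2))
      have hev : ∀ᶠ s in atTop, (τ i + S)/2 < ∑ j ∈ J, A i j * z s j :=
        htend.eventually (eventually_gt_nhds (by linarith))
      obtain ⟨T0, hT0⟩ := eventually_atTop.1 hev
      set T := max T0 0 with hT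
      set ε := min (γ * ((S - τ i)/2)) 1 with hε
      have hεpos : 0 < ε := lt_min (mul_pos hγ (by linarith)) one_pos
      apply hact i T ε hεpos (min_le_right _ _) (le_max_right _ _)
      intro t ht
      have h1 := hT0 t (le_trans (le_max_left _ _) ht)
      have h2 : ∑ j ∈ J, A i j * z t j ≤ ∑ j, A i j * z t j :=
        Finset.sum_le_sum_of_subset_of_nonneg (Finset.filter_subset _ _)
          (fun j _ _ => mul_nonneg (hA i j) (hbox t (le_trans (le_max_right _ _) ht) j).1)
      have h3 : γ * ((τ i + S)/2) ≤ γ * ∑ j, A i j * z t j :=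
        mul_le_mul_of_nonneg_left (by linarith) hγ.le
      have h4 : ε ≤ γ * ((S - τ i)/2) := min_le_left _ _
      nlinarith
end

section
/- Under the hypotheses of the must-cross-threshold lemma—0 < μᵢ < 1, k > 0 with z* := (1-μᵢ)/(2k) < 1, and γ(Az(t))ᵢ + bᵢ < b* := (1-μᵢ)²/(4k) for all t ≥ 0—if zᵢ(0) = 0 then zᵢ(t) < z* for all t ≥ 0. Equivalently, if zᵢ(0) = 0 and zᵢ(t⋆) ≥ z* for some t⋆, then there exists t* with γ(Az(t*))ᵢ + bᵢ ≥ b*. -/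
open Set

lemma sat_lt_of_lt {x c : ℝ} (hc : 0 < c) (hx : x < c) : sat x < c :=
  max_lt hc ((min_le_right 1 x).trans_lt hx)

lemma HasDerivAt.nonneg_of_isMaxOn_Icc {f : ℝ → ℝ} {f' a b : ℝ} (hab : a < b)
    (hf : HasDerivAt f f' b) (hmax : IsMaxOn f (Icc a b) b) : 0 ≤ f' := by
  have hcone : a - b ∈ posTangentConeAt (Icc a b) b :=
    sub_mem_posTangentConeAt_of_segment_subset
      ((segment_symm ℝ a b).symm ▸ (segment_eq_Icc hab.le).subset)
  have := hmax.localize.hasFDerivWithinAt_nonpos hf.hasDerivWithinAt.hasFDerivWithinAt hcone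
  simp only [ContinuousLinearMap.toSpanSingleton_apply, smul_eq_mul] at this
  nlinarith

theorem lt_of_hasDerivAt_neg_of_eq {f f' : ℝ → ℝ} {a c : ℝ}
    (hf : ∀ t ≥ a, HasDerivAt f (f' t) t) (ha : f a < c)
    (hpush : ∀ t ≥ a, f t = c → f' t < 0) : ∀ t ≥ a, f t < c := by
  intro t ht
  have hle : ∀ s ∈ Icc a t, f s ≤ c :=
    image_le_of_deriv_right_lt_deriv_boundary (B' := 0)
      (fun s hs => (hf s hs.1).continuousAt.continuousWithinAt)
      (fun s hs => (hf s hs.1).hasDerivWithinAt) ha.le (fun _ => hasDerivAt_const _ c)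
      (fun s hs => hpush s hs.1)
  rcases (hle t ⟨ht, le_rfl⟩).lt_or_eq with hlt | heq
  · exact hlt
  have hat : a < t := ht.lt_of_ne (by rintro rfl; exact ha.ne heq)
  have hmax : IsMaxOn f (Icc a t) t := fun s hs => heq ▸ hle s hs
  linarith [(hf t ht).nonneg_of_isMaxOn_Icc hat hmax, hpush t ht heq]

/-- The parabola `z ↦ μ z + k z² + (1 - μ)² / (4k)` touches the diagonal exactly at the tipping
value `(1 - μ) / (2k)`, so any smaller input keeps the drift there negative. -/
lemma nod_drift_neg_at_tipping {μ k u : ℝ} (hμ : μ < 1) (hk : 0 < k)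
    (hu : u < (1 - μ) ^ 2 / (4 * k)) :
    -((1 - μ) / (2 * k)) +
      sat (μ * ((1 - μ) / (2 * k)) + k * ((1 - μ) / (2 * k)) ^ 2 + u) < 0 := by
  set zs := (1 - μ) / (2 * k)
  have hzs : 0 < zs := div_pos (by linarith) (by linarith)
  have htangent : μ * zs + k * zs ^ 2 + (1 - μ) ^ 2 / (4 * k) = zs := by
    simp only [zs]; field_simp; ring
  linarith [sat_lt_of_lt hzs (by linarith : μ * zs + k * zs ^ 2 + u < zs)]

theorem nod_must_cross_threshold_general (n : ℕ) (A : Matrix (Fin n) (Fin n) ℝ)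
    (μ : Fin n → ℝ) (k γ : ℝ) (b : Fin n → ℝ) (i : Fin n)
    (hμ1 : μ i < 1) (hk : 0 < k)
    (z : ℝ → Fin n → ℝ)
    (hode : ∀ (t : ℝ) (j : Fin n), HasDerivAt (fun s => z s j)
      (-z t j + sat (μ j * z t j + k * (z t j)^2 + γ * (∑ l, A j l * z t l) + b j)) t)
    (hin : ∀ t : ℝ, 0 ≤ t →
      γ * (∑ l, A i l * z t l) + b i < (1 - μ i)^2 / (4 * k))
    (h0 : z 0 i = 0) :
    ∀ t : ℝ, 0 ≤ t → z t i < (1 - μ i) / (2 * k) := by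
  refine lt_of_hasDerivAt_neg_of_eq (f := fun s => z s i) (fun t _ => hode t i) ?_ ?_
  · rw [h0]; exact div_pos (by linarith) (by linarith)
  · intro t ht hzt
    have hdrift := nod_drift_neg_at_tipping hμ1 hk (hin t ht)
    rwa [← add_assoc, ← hzt] at hdrift

/-- must-cross-threshold lemma: if 0 < μᵢ < 1, k > 0,
z* = (1-μᵢ)/(2k) < 1, and the combined input γ(Az(t))ᵢ + bᵢ stays strictly
below b* = (1-μᵢ)²/(4k) for all t ≥ 0, then an agent starting at zᵢ(0) = 0
satisfies zᵢ(t) < z* for all t ≥ 0. -/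
theorem nod_must_cross_threshold (n : ℕ) (A : Matrix (Fin n) (Fin n) ℝ)
    (μ : Fin n → ℝ) (k γ : ℝ) (b : Fin n → ℝ) (i : Fin n)
    (hA : ∀ i j, 0 ≤ A i j) (hμ' : ∀ j, 0 ≤ μ j) (hγ : 0 ≤ γ)
    (hb : ∀ j, 0 ≤ b j) (hμ0 : 0 < μ i) (hμ1 : μ i < 1) (hk : 0 < k)
    (hzs : (1 - μ i) / (2 * k) < 1)
    (z : ℝ → Fin n → ℝ)
    (hode : ∀ (t : ℝ) (j : Fin n), HasDerivAt (fun s => z s j)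
      (-z t j + sat (μ j * z t j + k * (z t j)^2 + γ * (∑ l, A j l * z t l) + b j)) t)
    (hin : ∀ t : ℝ, 0 ≤ t →
      γ * (∑ l, A i l * z t l) + b i < (1 - μ i)^2 / (4 * k))
    (h0 : z 0 i = 0) :
    ∀ t : ℝ, 0 ≤ t → z t i < (1 - μ i) / (2 * k) :=
  nod_must_cross_threshold_general n A μ k γ b i hμ1 hk z hode hin h0
end

section
/- Let (A, τ) be an LTM instance satisfying (Aζ)ᵢ ≠ τᵢ for all ζ ∈ {0,1}ⁿ, i ∈ [n], and fix k ≥ 1. Then there exists γ* > 0 such that for all γ ∈ (0, γ*) and all seed sets I ⊆ [n], the NOD relaxation (A, μ, k, γ, 0) with μᵢ = 1 - 2√(γkτᵢ) satisfies C_NOD^(γ)(I) = C_LTM(I); in particular one may take γ* = kδ_gap²/(‖τ‖∞‖A‖∞²) where δ_gap = min{τᵢ - (Aζ)ᵢ : (Aζ)ᵢ < τᵢ}. -/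
open scoped Classical
open Filter

/-- If `f` has negative derivative at `t`, then just to the right `f < f t`. -/
lemma eventually_lt_of_hasDerivAt_neg {f : ℝ → ℝ} {d t : ℝ}
    (hf : HasDerivAt f d t) (hd : d < 0) :
    ∀ᶠ s in nhdsWithin t (Set.Ioi t), f s < f t := by
  have h := hasDerivAt_iff_tendsto_slope.mp hf
  have h2 : ∀ᶠ s in nhdsWithin t {t}ᶜ, slope f t s < 0 :=
    h.eventually (eventually_lt_nhds hd)
  have hsub : nhdsWithin t (Set.Ioi t) ≤ nhdsWithin t {t}ᶜ :=
    nhdsWithin_mono t (fun x hx => Set.mem_compl_singleton_iff.mpr (ne_of_gt hx))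
  filter_upwards [hsub h2, self_mem_nhdsWithin] with s hs hs'
  have hst : 0 < s - t := sub_pos.mpr hs'
  have : slope f t s = (f s - f t) / (s - t) := by
    rw [slope_def_field]
  rw [this] at hs
  rcases div_neg_iff.mp hs with ⟨h1, h2⟩ | ⟨h1, h2⟩
  · linarith
  · linarith

/-- Similarly: positive derivative means `f > f t` just to the right. -/
lemma eventually_gt_of_hasDerivAt_pos {f : ℝ → ℝ} {d t : ℝ}
    (hf : HasDerivAt f d t) (hd : 0 < d) :
    ∀ᶠ s in nhdsWithin t (Set.Ioi t), f t < f s := by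
  have := eventually_lt_of_hasDerivAt_neg (f := fun s => -f s) (hf.neg) (by linarith)
  filter_upwards [this] with s hs
  simpa using hs

/-- Multi-coordinate strict upper barrier: if each coordinate starts at or below
its barrier and whenever a coordinate touches its barrier (all coordinates being
at or below theirs) its derivative is strictly negative, then all coordinates
remain at or below their barriers for all later times. -/
lemma multi_barrier {ι : Type*} [Fintype ι] (w v : ℝ → ι → ℝ) (c : ι → ℝ) (T₀ : ℝ)
    (hd : ∀ t i, HasDerivAt (fun s => w s i) (v t i) t)
    (h0 : ∀ i, w T₀ i ≤ c i)
    (hneg : ∀ t, T₀ ≤ t → (∀ j, w t j ≤ c j) → ∀ i, w t i = c i → v t i < 0) :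
    ∀ t, T₀ ≤ t → ∀ i, w t i ≤ c i := by
  by_contra hcon
  push_neg at hcon
  obtain ⟨t₁, ht₁, i₁, hi₁⟩ := hcon
  set Bad : Set ℝ := {t | t ∈ Set.Icc T₀ t₁ ∧ ∃ i, c i < w t i} with hBad
  have hb1 : t₁ ∈ Bad := ⟨⟨ht₁, le_refl _⟩, ⟨i₁, hi₁⟩⟩
  have hbdd : BddBelow Bad := ⟨T₀, fun t ht => ht.1.1⟩
  have hne : Bad.Nonempty := ⟨t₁, hb1⟩
  set t₀ := sInf Bad with ht₀
  have hT₀t₀ : T₀ ≤ t₀ := le_csInf hne (fun t ht => ht.1.1)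
  have ht₀t₁ : t₀ ≤ t₁ := csInf_le hbdd hb1
  have hdiff : ∀ i, Differentiable ℝ (fun s => w s i) := fun i t => (hd t i).differentiableAt
  have hcont : ∀ i, Continuous (fun s => w s i) := fun i => (hdiff i).continuous
  have hgood : ∀ j, w t₀ j ≤ c j := by
    by_contra hg
    push_neg at hg
    obtain ⟨j, hj⟩ := hg
    rcases eq_or_lt_of_le hT₀t₀ with heq | hlt
    · exact absurd hj (not_lt.mpr (heq ▸ h0 j))
    · have hopen : IsOpen ((fun s => w s j) ⁻¹' Set.Ioi (c j)) :=
        (isOpen_Ioi).preimage (hcont j)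
      obtain ⟨ε, hε, hball⟩ := Metric.isOpen_iff.mp hopen t₀ hj
      set s := max T₀ (t₀ - ε/2) with hs
      have hs1 : s < t₀ := max_lt hlt (by linarith)
      have hs2 : T₀ ≤ s := le_max_left _ _
      have hs3 : dist s t₀ < ε := by
        rw [Real.dist_eq, abs_lt]
        constructor
        · have : t₀ - ε/2 ≤ s := le_max_right _ _
          linarith
        · linarith
      have : s ∈ Bad := ⟨⟨hs2, le_trans hs1.le ht₀t₁⟩, ⟨j, hball hs3⟩⟩
      exact absurd (csInf_le hbdd this) (not_le.mpr hs1)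
  have ht₀lt : t₀ < t₁ := by
    rcases eq_or_lt_of_le ht₀t₁ with heq | h
    · exfalso
      obtain ⟨i, hi⟩ := hb1.2
      rw [← heq] at hi
      exact absurd hi (not_lt.mpr (hgood i))
    · exact h
  have hev : ∀ i, ∀ᶠ s in nhdsWithin t₀ (Set.Ioi t₀), w s i ≤ c i := by
    intro i
    rcases lt_or_eq_of_le (hgood i) with hlt | heq
    · have : ∀ᶠ s in nhds t₀, w s i < c i :=
        ((hcont i).continuousAt).eventually_lt continuousAt_const hlt
      exact (this.filter_mono nhdsWithin_le_nhds).mono (fun s hs => hs.le)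
    · have hv := hneg t₀ hT₀t₀ hgood i heq
      have := eventually_lt_of_hasDerivAt_neg (hd t₀ i) hv
      exact this.mono (fun s hs => heq ▸ hs.le)
  have hall : ∀ᶠ s in nhdsWithin t₀ (Set.Ioi t₀), ∀ i, w s i ≤ c i :=
    Filter.eventually_all.mpr hev
  obtain ⟨u, hu, hsub⟩ := mem_nhdsGT_iff_exists_Ioc_subset.mp hall
  have hkey : ∀ s ∈ Bad, min u t₁ ≤ s := by
    intro s hs
    have hs0 : t₀ ≤ s := csInf_le hbdd hs
    have hsne : s ≠ t₀ := by
      rintro rfl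
      obtain ⟨i, hi⟩ := hs.2
      exact absurd hi (not_lt.mpr (hgood i))
    have hs0' : t₀ < s := lt_of_le_of_ne hs0 (Ne.symm hsne)
    by_contra hc
    push_neg at hc
    have hsu : s ∈ Set.Ioc t₀ u := ⟨hs0', le_of_lt (lt_of_lt_of_le hc (min_le_left _ _))⟩
    obtain ⟨i, hi⟩ := hs.2
    exact absurd hi (not_lt.mpr (hsub hsu i))
  have : min u t₁ ≤ t₀ := le_csInf hne hkey
  have : t₀ < min u t₁ := lt_min hu ht₀lt
  linarith

/-- If the derivative is at least `ε` on `[a,b]`, the function grows by `ε (b-a)`. -/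
lemma growth_of_deriv_ge (w v : ℝ → ℝ) (hd : ∀ t, HasDerivAt w (v t) t)
    {a b ε : ℝ} (hab : a ≤ b) (hε : ∀ t ∈ Set.Icc a b, ε ≤ v t) :
    w a + ε * (b - a) ≤ w b := by
  set g : ℝ → ℝ := fun t => w t - ε * t with hg
  have hdg : ∀ t, HasDerivAt g (v t - ε) t := by
    intro t
    have h2 : HasDerivAt (fun x : ℝ => ε * x) ε t := by
      simpa using (hasDerivAt_id t).const_mul ε
    exact (hd t).sub h2
  have hdiffg : Differentiable ℝ g := fun t => (hdg t).differentiableAt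
  have hmono : MonotoneOn g (Set.Icc a b) := by
    apply monotoneOn_of_deriv_nonneg (convex_Icc a b)
    · exact hdiffg.continuous.continuousOn
    · intro t ht
      exact (hdiffg t).differentiableWithinAt
    · intro t ht
      rw [interior_Icc] at ht
      rw [(hdg t).deriv]
      have := hε t ⟨ht.1.le, ht.2.le⟩
      linarith
  have := hmono (Set.left_mem_Icc.mpr hab) (Set.right_mem_Icc.mpr hab) hab
  simp only [hg] at this
  nlinarith

/-- Exponential upper bound: if `w + v ≤ c` always (for `t ≥ T₀`) then `w ≤ c` stays. -/
lemma exp_upper (w v : ℝ → ℝ) (c T₀ : ℝ) (hd : ∀ t, HasDerivAt w (v t) t)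
    (h : ∀ t, T₀ ≤ t → w t + v t ≤ c) (h0 : w T₀ ≤ c) :
    ∀ t, T₀ ≤ t → w t ≤ c := by
  set g : ℝ → ℝ := fun t => Real.exp t * (w t - c) with hg
  have hdg : ∀ t, HasDerivAt g (Real.exp t * (w t - c) + Real.exp t * v t) t := by
    intro t
    exact (Real.hasDerivAt_exp t).mul ((hd t).sub_const c)
  have hdiffg : Differentiable ℝ g := fun t => (hdg t).differentiableAt
  have hanti : AntitoneOn g (Set.Ici T₀) := by
    apply antitoneOn_of_deriv_nonpos (convex_Ici T₀)
    · exact hdiffg.continuous.continuousOn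
    · intro t ht
      exact (hdiffg t).differentiableWithinAt
    · intro t ht
      rw [interior_Ici] at ht
      rw [(hdg t).deriv]
      have h1 := h t ht.le
      have h2 := Real.exp_pos t
      nlinarith
  intro t ht
  have := hanti (Set.self_mem_Ici) ht ht
  simp only [hg] at this
  have h2 := Real.exp_pos t
  nlinarith [mul_nonpos_of_nonneg_of_nonpos (Real.exp_pos T₀).le (by linarith : w T₀ - c ≤ 0)]

/-- Exponential lower bound, by symmetry. -/
lemma exp_lower (w v : ℝ → ℝ) (c T₀ : ℝ) (hd : ∀ t, HasDerivAt w (v t) t)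
    (h : ∀ t, T₀ ≤ t → c ≤ w t + v t) (h0 : c ≤ w T₀) :
    ∀ t, T₀ ≤ t → c ≤ w t := by
  have key := exp_upper (fun s => -w s) (fun s => -v s) (-c) T₀ (fun s => (hd s).neg)
    (fun s hs => by have := h s hs; show -w s + -v s ≤ -c; linarith)
    (show -w T₀ ≤ -c by linarith)
  intro t ht
  have h2 : -w t ≤ -c := key t ht
  linarith

/-- Convergence to 1: if `w ≤ 1` and `1 - w ≤ v = w'` for `t ≥ T`, then `w → 1`. -/
lemma tendsto_one_of_deriv (w v : ℝ → ℝ) (T : ℝ) (hd : ∀ t, HasDerivAt w (v t) t)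
    (hup : ∀ t, T ≤ t → w t ≤ 1) (hlow : ∀ t, T ≤ t → 1 - w t ≤ v t) :
    Filter.Tendsto w Filter.atTop (nhds 1) := by
  set g : ℝ → ℝ := fun t => Real.exp t * (w t - 1) with hg
  have hdg : ∀ t, HasDerivAt g (Real.exp t * (w t - 1) + Real.exp t * v t) t := by
    intro t
    exact (Real.hasDerivAt_exp t).mul ((hd t).sub_const 1)
  have hdiffg : Differentiable ℝ g := fun t => (hdg t).differentiableAt
  have hmono : MonotoneOn g (Set.Ici T) := by
    apply monotoneOn_of_deriv_nonneg (convex_Ici T)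
    · exact hdiffg.continuous.continuousOn
    · intro t ht
      exact (hdiffg t).differentiableWithinAt
    · intro t ht
      rw [interior_Ici] at ht
      rw [(hdg t).deriv]
      have h1 := hlow t ht.le
      have h2 := Real.exp_pos t
      nlinarith
  have hged : ∀ t, T ≤ t → 1 + g T * Real.exp (-t) ≤ w t := by
    intro t ht
    have h1 : g T ≤ Real.exp t * (w t - 1) := hmono Set.self_mem_Ici ht ht
    have h2 := Real.exp_pos t
    have h4 : g T * (Real.exp t)⁻¹ ≤ (Real.exp t * (w t - 1)) * (Real.exp t)⁻¹ :=
      mul_le_mul_of_nonneg_right h1 (by positivity)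
    have h5 : (Real.exp t * (w t - 1)) * (Real.exp t)⁻¹ = w t - 1 := by
      field_simp
    rw [Real.exp_neg]
    rw [h5] at h4
    linarith
  have hlo : Filter.Tendsto (fun t => 1 + g T * Real.exp (-t)) Filter.atTop (nhds 1) := by
    have : Filter.Tendsto (fun t => g T * Real.exp (-t)) Filter.atTop (nhds 0) := by
      simpa using (Real.tendsto_exp_neg_atTop_nhds_zero).const_mul (g T)
    simpa using (tendsto_const_nhds (x := (1:ℝ))).add this
  apply tendsto_of_tendsto_of_tendsto_of_le_of_le' hlo tendsto_const_nhds
  · filter_upwards [Filter.eventually_ge_atTop T] with t ht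
    exact hged t ht
  · filter_upwards [Filter.eventually_ge_atTop T] with t ht
    exact hup t ht

section LTMLemmas

variable {n : ℕ} (A : Matrix (Fin n) (Fin n) ℝ) (τ : Fin n → ℝ)

lemma ltmStep_true {ζ : Fin n → Bool} {i : Fin n} (h : ζ i = true) :
    ltmStep A τ ζ i = true := by
  simp [ltmStep, h]

lemma ltm_iter_mono {ζ₀ : Fin n → Bool} {i : Fin n} {s t : ℕ} (hst : s ≤ t)
    (h : (ltmStep A τ)^[s] ζ₀ i = true) : (ltmStep A τ)^[t] ζ₀ i = true := by
  induction t, hst using Nat.le_induction with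
  | base => exact h
  | succ t hst ih =>
    rw [Function.iterate_succ_apply']
    exact ltmStep_true A τ ih

lemma ltm_exists_fixed (ζ₀ : Fin n → Bool) :
    ∃ m : ℕ, (ltmStep A τ)^[m + 1] ζ₀ = (ltmStep A τ)^[m] ζ₀ := by
  by_contra hcon
  push_neg at hcon
  set S : ℕ → Finset (Fin n) := fun m => Finset.univ.filter
    (fun i => (ltmStep A τ)^[m] ζ₀ i = true) with hS
  have hssub : ∀ m, S m ⊂ S (m + 1) := by
    intro m
    constructor
    · intro i hi
      simp only [hS, Finset.mem_filter, Finset.mem_univ, true_and] at hi ⊢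
      rw [Function.iterate_succ_apply']
      exact ltmStep_true A τ hi
    · intro hsub
      apply hcon m
      funext i
      by_cases hi : (ltmStep A τ)^[m] ζ₀ i = true
      · rw [hi, Function.iterate_succ_apply']
        exact ltmStep_true A τ hi
      · have hi2 : (ltmStep A τ)^[m + 1] ζ₀ i ≠ true := by
          intro hc
          apply hi
          have : i ∈ S (m + 1) := by
            simp only [hS, Finset.mem_filter, Finset.mem_univ, true_and]
            exact hc
          have := hsub this
          simp only [hS, Finset.mem_filter, Finset.mem_univ, true_and] at this
          exact this
        simp only [Bool.not_eq_true] at hi hi2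
        rw [hi, hi2]
  have hcard : ∀ m, m ≤ (S m).card := by
    intro m
    induction m with
    | zero => exact Nat.zero_le _
    | succ m ih => exact Nat.lt_of_le_of_lt ih (Finset.card_lt_card (hssub m))
  have h1 := hcard (n + 1)
  have h2 : (S (n + 1)).card ≤ n := by
    have := Finset.card_le_univ (S (n + 1))
    simpa using this
  omega

lemma ltm_fixed_forever {ζ₀ : Fin n → Bool} {m : ℕ}
    (hm : (ltmStep A τ)^[m + 1] ζ₀ = (ltmStep A τ)^[m] ζ₀) :
    ∀ t, m ≤ t → (ltmStep A τ)^[t] ζ₀ = (ltmStep A τ)^[m] ζ₀ := by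
  intro t ht
  induction t, ht using Nat.le_induction with
  | base => rfl
  | succ t hst ih =>
    rw [Function.iterate_succ_apply', ih]
    have : ltmStep A τ ((ltmStep A τ)^[m] ζ₀) = (ltmStep A τ)^[m + 1] ζ₀ :=
      (Function.iterate_succ_apply' (ltmStep A τ) m ζ₀).symm
    rw [this, hm]

end LTMLemmas

set_option maxHeartbeats 2000000 in
/-- asymptotic equivalence: for a generic LTM instance
((Aζ)ᵢ ≠ τᵢ for all binary states ζ) and fixed k ≥ 1, taking
γ* = kδ_gap²/(‖τ‖∞‖A‖∞²) with δ_gap = min{τᵢ - (Aζ)ᵢ : (Aζ)ᵢ < τᵢ},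
for every γ ∈ (0, γ*) giving a valid NOD relaxation (γk‖τ‖∞ < 1/4,
μᵢ = 1 - 2√(γkτᵢ)) and every seed set I, the NOD cascade set
{i : zᵢ(t) → 1} equals the LTM cascade set C_LTM(I). -/
theorem nod_cascade_equals_ltm_cascade (n : ℕ) [NeZero n]
    (A : Matrix (Fin n) (Fin n) ℝ) (τ : Fin n → ℝ)
    (hA : ∀ i j, 0 ≤ A i j) (hdiag : ∀ i, A i i = 0)
    (hirr : ∀ i j, ∃ m : ℕ, 0 < (A ^ m) i j) (hτ : ∀ i, 0 < τ i)
    (hgen : ∀ (ζ : Fin n → Bool) (i : Fin n),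
      (∑ j, A i j * (if ζ j then (1:ℝ) else 0)) ≠ τ i)
    (k : ℝ) (hk : 1 ≤ k)
    (τmax anorm δgap : ℝ)
    (hτmax : τmax = Finset.univ.sup' Finset.univ_nonempty τ)
    (hanorm : anorm = Finset.univ.sup' Finset.univ_nonempty (fun i => ∑ j, A i j))
    (hδpos : 0 < δgap)
    (hδle : ∀ (ζ : Fin n → Bool) (i : Fin n),
      (∑ j, A i j * (if ζ j then (1:ℝ) else 0)) < τ i →
      δgap ≤ τ i - ∑ j, A i j * (if ζ j then (1:ℝ) else 0))
    (hδatt : ∃ (ζ : Fin n → Bool) (i : Fin n),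
      (∑ j, A i j * (if ζ j then (1:ℝ) else 0)) < τ i ∧
      δgap = τ i - ∑ j, A i j * (if ζ j then (1:ℝ) else 0)) :
    ∀ γ : ℝ, 0 < γ → γ < k * δgap^2 / (τmax * anorm^2) →
      γ * k * τmax < 1 / 4 →
      ∀ (μ : Fin n → ℝ), (∀ i, μ i = 1 - 2 * Real.sqrt (γ * k * τ i)) →
      ∀ (I : Finset (Fin n)) (z : ℝ → Fin n → ℝ),
        (∀ i, z 0 i = if i ∈ I then 1 else 0) →
        (∀ (t : ℝ) (i : Fin n), HasDerivAt (fun s => z s i)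
          (-z t i + sat (μ i * z t i + k * (z t i)^2 + γ * ∑ j, A i j * z t j)) t) →
        {i : Fin n | Tendsto (fun t => z t i) atTop (nhds 1)} = ltmCascade A τ I := by
  intro γ hγ0 hγlt hγquarter μ hμ I z hz0 hode
  have hk0 : (0:ℝ) < k := lt_of_lt_of_le one_pos hk
  -- basic facts about τmax and anorm
  have hτle : ∀ i, τ i ≤ τmax := by
    intro i; rw [hτmax]; exact Finset.le_sup' τ (Finset.mem_univ i)
  have hτmaxpos : 0 < τmax := by
    obtain ⟨i⟩ := (inferInstance : Nonempty (Fin n))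
    exact lt_of_lt_of_le (hτ i) (hτle i)
  have hrowle : ∀ i, (∑ j, A i j) ≤ anorm := by
    intro i; rw [hanorm]; exact Finset.le_sup' (fun i => ∑ j, A i j) (Finset.mem_univ i)
  have hanorm0 : 0 ≤ anorm := by
    obtain ⟨i⟩ := (inferInstance : Nonempty (Fin n))
    exact le_trans (Finset.sum_nonneg (fun j _ => hA i j)) (hrowle i)
  -- facts about sat
  have hsat0 : ∀ x : ℝ, 0 ≤ sat x := fun x => le_max_left 0 _
  have hsat1 : ∀ x : ℝ, sat x ≤ 1 := by
    intro x; rw [sat]; exact max_le zero_le_one (min_le_left 1 x)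
  have hsat_one : ∀ x : ℝ, 1 ≤ x → sat x = 1 := by
    intro x hx
    rw [sat, min_eq_left hx, max_eq_right zero_le_one]
  have hsat_le : ∀ x : ℝ, sat x ≤ max 0 x := by
    intro x; rw [sat]; exact max_le_max le_rfl (min_le_right 1 x)
  have hsat_ge : ∀ x : ℝ, min 1 x ≤ sat x := fun x => le_max_right 0 _
  -- the vector field
  obtain ⟨V, hVdef⟩ : ∃ V : ℝ → Fin n → ℝ, ∀ t i, V t i =
      -z t i + sat (μ i * z t i + k * (z t i)^2 + γ * ∑ j, A i j * z t j) :=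
    ⟨_, fun t i => rfl⟩
  have hode' : ∀ (t : ℝ) (i : Fin n), HasDerivAt (fun s => z s i) (V t i) t := by
    intro t i; rw [hVdef]; exact hode t i
  -- global bounds 0 ≤ z ≤ 1 for t ≥ 0
  have hz01 : ∀ i, 0 ≤ z 0 i ∧ z 0 i ≤ 1 := by
    intro i; rw [hz0 i]; split <;> norm_num
  have hz_le1 : ∀ t, 0 ≤ t → ∀ i, z t i ≤ 1 := by
    intro t ht i
    refine exp_upper (fun s => z s i) (fun s => V s i) 1 0 (fun s => hode' s i) ?_ (hz01 i).2 t ht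
    intro s _
    have := hsat1 (μ i * z s i + k * (z s i)^2 + γ * ∑ j, A i j * z s j)
    have h2 := hVdef s i
    show z s i + V s i ≤ 1
    linarith
  have hz_ge0 : ∀ t, 0 ≤ t → ∀ i, 0 ≤ z t i := by
    intro t ht i
    refine exp_lower (fun s => z s i) (fun s => V s i) 0 0 (fun s => hode' s i) ?_ (hz01 i).1 t ht
    intro s _
    have := hsat0 (μ i * z s i + k * (z s i)^2 + γ * ∑ j, A i j * z s j)
    have h2 := hVdef s i
    show (0:ℝ) ≤ z s i + V s i
    linarith
  have hAz_nonneg : ∀ t, 0 ≤ t → ∀ i, 0 ≤ γ * ∑ j, A i j * z t j := by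
    intro t ht i
    apply mul_nonneg hγ0.le
    exact Finset.sum_nonneg (fun j _ => mul_nonneg (hA i j) (hz_ge0 t ht j))
  -- facts about μ
  have hsqrt_lt : Real.sqrt (γ * k * τmax) < 1/2 :=
    (Real.sqrt_lt' (by norm_num)).mpr (by nlinarith)
  obtain ⟨μmin, hμmin⟩ : ∃ x : ℝ, x = 1 - 2 * Real.sqrt (γ * k * τmax) := ⟨_, rfl⟩
  have hμmin_pos : 0 < μmin := by rw [hμmin]; linarith
  have hμmin_le1 : μmin ≤ 1 := by
    have := Real.sqrt_nonneg (γ * k * τmax); rw [hμmin]; linarith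
  have hμ_ge : ∀ i, μmin ≤ μ i := by
    intro i
    rw [hμ i, hμmin]
    have h1 : γ * k * τ i ≤ γ * k * τmax :=
      mul_le_mul_of_nonneg_left (hτle i) (by positivity)
    have := Real.sqrt_le_sqrt h1
    linarith
  obtain ⟨c₁, hc₁⟩ : ∃ x : ℝ, x = 1 - μmin/4 := ⟨_, rfl⟩
  have hc₁lt1 : c₁ < 1 := by rw [hc₁]; linarith
  have hc₁34 : (3:ℝ)/4 ≤ c₁ := by rw [hc₁]; linarith
  have hkey1 : ∀ (i : Fin n) (x : ℝ), c₁ ≤ x → 1 ≤ μ i * x + k * x^2 := by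
    intro i x hx
    have h1 := hμ_ge i
    have hx0 : (0:ℝ) < x := by linarith
    have h2 : μmin * x ≤ μ i * x := mul_le_mul_of_nonneg_right h1 hx0.le
    have h3 : x^2 ≤ k * x^2 := by nlinarith
    have h4 : μmin * c₁ ≤ μmin * x := mul_le_mul_of_nonneg_left hx hμmin_pos.le
    have h5 : c₁^2 ≤ x^2 := by nlinarith
    have h6 : 1 ≤ μmin * c₁ + c₁^2 := by rw [hc₁]; nlinarith
    linarith
  -- H1: once a coordinate is ≥ c₁ it stays there and tends to 1
  have H1 : ∀ (i : Fin n) (T : ℝ), 0 ≤ T → c₁ ≤ z T i →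
      Tendsto (fun t => z t i) atTop (nhds 1) := by
    intro i T hT hzT
    have hbar : ∀ t, T ≤ t → c₁ ≤ z t i := by
      have hmb := multi_barrier (ι := Unit) (fun t _ => -(z t i)) (fun t _ => -(V t i))
        (fun _ => -c₁) T (fun t _ => (hode' t i).neg)
        (fun _ => by simp only [neg_le_neg_iff]; exact hzT)
        ?_
      · intro t ht
        have := hmb t ht ()
        simp only [neg_le_neg_iff] at this
        exact this
      · intro t ht _ u heq
        simp only [neg_inj] at heq
        have ht0 : (0:ℝ) ≤ t := le_trans hT ht
        have hge1 : (1:ℝ) ≤ μ i * z t i + k * (z t i)^2 + γ * ∑ j, A i j * z t j := by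
          have h1 := hkey1 i (z t i) (le_of_eq heq.symm)
          have h2 := hAz_nonneg t ht0 i
          linarith
        have hs := hsat_one _ hge1
        have h3 := hVdef t i
        rw [hs] at h3
        show -(V t i) < 0
        rw [neg_lt_zero]
        rw [h3, heq]
        linarith
    apply tendsto_one_of_deriv (fun t => z t i) (fun t => V t i) T (fun t => hode' t i)
      (fun t ht => hz_le1 t (le_trans hT ht) i)
    intro t ht
    have ht0 : (0:ℝ) ≤ t := le_trans hT ht
    have hge1 : (1:ℝ) ≤ μ i * z t i + k * (z t i)^2 + γ * ∑ j, A i j * z t j := by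
      have h1 := hkey1 i (z t i) (hbar t ht)
      have h2 := hAz_nonneg t ht0 i
      linarith
    have h3 := hVdef t i
    rw [hsat_one _ hge1] at h3
    show 1 - z t i ≤ V t i
    linarith
  -- quadratic lower bound used by H2
  have hquad : ∀ (i : Fin n) (x : ℝ), 0 ≤ x →
      0 ≤ k * x^2 - 2 * Real.sqrt (γ * k * τ i) * x + γ * τ i := by
    intro i x hx
    have h1 : Real.sqrt (γ * k * τ i) = Real.sqrt k * Real.sqrt (γ * τ i) := by
      rw [← Real.sqrt_mul hk0.le]
      ring_nf
    have h2 : Real.sqrt k ^ 2 = k := Real.sq_sqrt hk0.le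
    have h3 : Real.sqrt (γ * τ i) ^ 2 = γ * τ i := Real.sq_sqrt (mul_nonneg hγ0.le (hτ i).le)
    nlinarith [sq_nonneg (Real.sqrt k * x - Real.sqrt (γ * τ i))]
  -- H2: sufficient persistent input forces activation
  have H2 : ∀ (i : Fin n) (b T : ℝ), 0 ≤ T → γ * τ i < b →
      (∀ t, T ≤ t → b ≤ γ * ∑ j, A i j * z t j) →
      Tendsto (fun t => z t i) atTop (nhds 1) := by
    intro i b T hT hb hinput
    obtain ⟨ε, hε⟩ : ∃ x : ℝ, x = min (b - γ * τ i) (1 - c₁) := ⟨_, rfl⟩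
    have hεpos : 0 < ε := by
      rw [hε]; exact lt_min (by linarith) (by linarith)
    have hε1 : ε ≤ b - γ * τ i := by rw [hε]; exact min_le_left _ _
    have hε2 : ε ≤ 1 - c₁ := by rw [hε]; exact min_le_right _ _
    have hvlb : ∀ t, T ≤ t → z t i ≤ c₁ → ε ≤ V t i := by
      intro t ht hzc
      have ht0 : (0:ℝ) ≤ t := le_trans hT ht
      have h0z := hz_ge0 t ht0 i
      have hq := hquad i (z t i) h0z
      have hin := hinput t ht
      have hμi := hμ i
      have hVt := hVdef t i
      have hsg := hsat_ge (μ i * z t i + k * (z t i)^2 + γ * ∑ j, A i j * z t j)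
      rcases le_total 1 (μ i * z t i + k * (z t i)^2 + γ * ∑ j, A i j * z t j) with h | h
      · rw [min_eq_left h] at hsg
        linarith
      · rw [min_eq_right h] at hsg
        -- V ≥ s - z ≥ b - γτ ≥ ε, using the quadratic bound
        have : b - γ * τ i ≤ μ i * z t i + k * (z t i)^2 + γ * (∑ j, A i j * z t j) - z t i := by
          rw [hμi]
          linarith
        linarith
    have hreach : ∃ T', T ≤ T' ∧ c₁ ≤ z T' i := by
      by_contra hcon
      push_neg at hcon
      obtain ⟨T2, hT2⟩ : ∃ x : ℝ, x = T + 2/ε := ⟨_, rfl⟩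
      have hTT2 : T ≤ T2 := by
        rw [hT2]; have : 0 < 2/ε := by positivity
        linarith
      have hgrow := growth_of_deriv_ge (fun t => z t i) (fun t => V t i)
        (fun t => hode' t i) hTT2
        (fun t htm => hvlb t htm.1 (le_of_lt (hcon t htm.1)))
      have h1 := hz_le1 T2 (le_trans hT hTT2) i
      have h0 := hz_ge0 T hT i
      have hεT : ε * (T2 - T) = 2 := by
        rw [hT2]
        field_simp
        ring
      rw [hεT] at hgrow
      linarith
    obtain ⟨T', hT', hc⟩ := hreach
    exact H1 i T' (le_trans hT hT') hc
  -- forward direction: LTM cascade nodes tend to 1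
  have HF : ∀ (m : ℕ) (i : Fin n),
      (ltmStep A τ)^[m] (fun j => decide (j ∈ I)) i = true →
      Tendsto (fun t => z t i) atTop (nhds 1) := by
    intro m
    induction m with
    | zero =>
      intro i hi
      simp only [Function.iterate_zero, id_eq, decide_eq_true_eq] at hi
      have hz1 : z 0 i = 1 := by rw [hz0 i, if_pos hi]
      exact H1 i 0 le_rfl (by rw [hz1]; linarith)
    | succ m ih =>
      intro i hi
      rw [Function.iterate_succ_apply'] at hi
      simp only [ltmStep, Bool.or_eq_true, decide_eq_true_eq] at hi
      rcases hi with hi | hi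
      · exact ih i hi
      · obtain ⟨σ, hσ⟩ : ∃ x : ℝ, x = ∑ j, A i j *
          (if (ltmStep A τ)^[m] (fun j => decide (j ∈ I)) j then (1:ℝ) else 0) := ⟨_, rfl⟩
        rw [← hσ] at hi
        have hσpos : 0 < σ := lt_trans (hτ i) hi
        obtain ⟨c₂, hc₂⟩ : ∃ x : ℝ, x = (τ i + σ)/(2*σ) := ⟨_, rfl⟩
        have hc₂1 : c₂ < 1 := by
          rw [hc₂, div_lt_one (by positivity)]
          linarith
        have hc₂σ : γ * τ i < γ * (c₂ * σ) := by
          have h1 : c₂ * σ = (τ i + σ)/2 := by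
            rw [hc₂]; field_simp
          rw [h1]
          have : τ i < (τ i + σ)/2 := by linarith
          exact mul_lt_mul_of_pos_left this hγ0
        have hev : ∀ᶠ t in atTop, ∀ j : Fin n,
            (ltmStep A τ)^[m] (fun j => decide (j ∈ I)) j = true → c₂ ≤ z t j := by
          apply Filter.eventually_all.mpr
          intro j
          by_cases hj : (ltmStep A τ)^[m] (fun j => decide (j ∈ I)) j = true
          · have htend := ih j hj
            have := htend.eventually (eventually_gt_nhds hc₂1)
            exact this.mono (fun t h _ => h.le)
          · exact Filter.Eventually.of_forall (fun t h => absurd h hj)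
        obtain ⟨T0, hT0⟩ := Filter.eventually_atTop.mp hev
        apply H2 i (γ * (c₂ * σ)) (max T0 0) (le_max_right _ _) hc₂σ
        intro t ht
        have ht0 : (0:ℝ) ≤ t := le_trans (le_max_right _ _) ht
        have hTt : T0 ≤ t := le_trans (le_max_left _ _) ht
        have h1 : c₂ * σ ≤ ∑ j, A i j * z t j := by
          rw [hσ, Finset.mul_sum]
          apply Finset.sum_le_sum
          intro j _
          by_cases hj : (ltmStep A τ)^[m] (fun j => decide (j ∈ I)) j = true
          · rw [if_pos hj]
            have h2 := hT0 t hTt j hj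
            have h3 : A i j * c₂ ≤ A i j * z t j := mul_le_mul_of_nonneg_left h2 (hA i j)
            have h4 : c₂ * (A i j * 1) = A i j * c₂ := by ring
            rw [h4]
            exact h3
          · rw [if_neg hj]
            have h2 := mul_nonneg (hA i j) (hz_ge0 t ht0 j)
            have h3 : c₂ * (A i j * 0) = 0 := by ring
            rw [h3]
            exact h2
        exact mul_le_mul_of_nonneg_left h1 hγ0.le
  -- the stabilized LTM state
  obtain ⟨m, hmfix⟩ := ltm_exists_fixed A τ (fun j => decide (j ∈ I))
  obtain ⟨ζf, hζ⟩ : ∃ ζ : Fin n → Bool, ζ = (ltmStep A τ)^[m] (fun j => decide (j ∈ I)) :=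
    ⟨_, rfl⟩
  have hfix : ltmStep A τ ζf = ζf := by
    rw [hζ]
    have : ltmStep A τ ((ltmStep A τ)^[m] (fun j => decide (j ∈ I))) =
        (ltmStep A τ)^[m + 1] (fun j => decide (j ∈ I)) :=
      (Function.iterate_succ_apply' (ltmStep A τ) m _).symm
    rw [this, hmfix]
  have hcasc : ∀ i, i ∈ ltmCascade A τ I ↔ ζf i = true := by
    intro i
    constructor
    · rintro ⟨t, hti⟩
      rcases le_total t m with h | h
      · rw [hζ]; exact ltm_iter_mono A τ h hti
      · have := ltm_fixed_forever A τ hmfix t h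
        rw [this] at hti
        rw [hζ]; exact hti
    · intro h
      exact ⟨m, by rw [← hζ]; exact h⟩
  -- inactive nodes have LTM input below threshold minus the gap
  have hinact : ∀ i, ζf i = false →
      (∑ j, A i j * (if ζf j then (1:ℝ) else 0)) ≤ τ i - δgap := by
    intro i h
    have h1 := congrFun hfix i
    rw [h] at h1
    simp only [ltmStep, h, Bool.false_or] at h1
    have h2 : ¬ (τ i < ∑ j, A i j * (if ζf j then (1:ℝ) else 0)) :=
      of_decide_eq_false h1
    have h3 : (∑ j, A i j * (if ζf j then (1:ℝ) else 0)) < τ i :=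
      lt_of_le_of_ne (not_lt.mp h2) (hgen ζf i)
    linarith [hδle ζf i h3]
  -- the subthreshold scale
  obtain ⟨zs, hzs⟩ : ∃ x : ℝ, x = Real.sqrt (γ * τmax / k) := ⟨_, rfl⟩
  have hzs0 : 0 ≤ zs := by rw [hzs]; exact Real.sqrt_nonneg _
  have hzs_lt : zs < 1/2 := by
    rw [hzs]
    apply (Real.sqrt_lt' (by norm_num)).mpr
    have h1 : γ * τmax ≤ γ * k * τmax := by
      have := mul_le_mul_of_nonneg_right (mul_le_mul_of_nonneg_left hk hγ0.le) hτmaxpos.le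
      calc γ * τmax = γ * 1 * τmax := by ring
      _ ≤ γ * k * τmax := this
    have h2 : γ * τmax / k ≤ γ * τmax := div_le_self (by positivity) hk
    have h3 : ((1:ℝ)/2)^2 = 1/4 := by norm_num
    linarith
  have hzs_le : ∀ i, Real.sqrt (γ * τ i / k) ≤ zs := by
    intro i
    rw [hzs]
    apply Real.sqrt_le_sqrt
    exact (div_le_div_iff_of_pos_right hk0).mpr (mul_le_mul_of_nonneg_left (hτle i) hγ0.le)
  have hza : anorm * zs < δgap := by
    rcases eq_or_lt_of_le hanorm0 with h0 | hpos
    · rw [← h0]; simpa using hδpos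
    · have hz2 : zs^2 = γ * τmax / k := by
        rw [hzs]; exact Real.sq_sqrt (by positivity)
      have hγ2 : γ * (τmax * anorm^2) < k * δgap^2 := by
        have := (lt_div_iff₀ (by positivity)).mp hγlt
        linarith
      have hlt : (anorm * zs)^2 < δgap^2 := by
        have he : anorm^2 * (γ * τmax / k) = γ * (τmax * anorm^2) / k := by ring
        rw [mul_pow, hz2, he, div_lt_iff₀ hk0]
        nlinarith [hγ2]
      exact lt_of_pow_lt_pow_left₀ 2 hδpos.le hlt
  -- barrier for inactive nodes
  have hbar : ∀ t, 0 ≤ t → ∀ p : {i : Fin n // ζf i = false},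
      z t p.1 ≤ Real.sqrt (γ * τ p.1 / k) := by
    apply multi_barrier (ι := {i : Fin n // ζf i = false}) (fun t p => z t p.1)
      (fun t p => V t p.1) (fun p => Real.sqrt (γ * τ p.1 / k)) 0 (fun t p => hode' t p.1)
    · intro p
      obtain ⟨i, hfalse⟩ := p
      simp only
      have hnotI : i ∉ I := by
        intro hin
        have h1 : (ltmStep A τ)^[0] (fun j => decide (j ∈ I)) i = true := by
          rw [Function.iterate_zero, id_eq]
          exact decide_eq_true hin
        have h3 := ltm_iter_mono A τ (Nat.zero_le m) h1
        rw [← hζ] at h3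
        rw [hfalse] at h3
        exact Bool.false_ne_true h3
      rw [hz0, if_neg hnotI]
      exact Real.sqrt_nonneg _
    · intro t ht hall p heq
      obtain ⟨i, hfalse⟩ := p
      simp only at heq hall ⊢
      have hci0 : 0 < Real.sqrt (γ * τ i / k) := Real.sqrt_pos.mpr (div_pos (mul_pos hγ0 (hτ i)) hk0)
      obtain ⟨ci, hci⟩ : ∃ x : ℝ, x = Real.sqrt (γ * τ i / k) := ⟨_, rfl⟩
      rw [← hci] at heq hci0
      -- input bound
      have hsum : ∑ j, A i j * z t j ≤ (τ i - δgap) + zs * anorm := by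
        have step1 : ∑ j, A i j * z t j ≤
            ∑ j, A i j * ((if ζf j then (1:ℝ) else 0) + zs) := by
          apply Finset.sum_le_sum
          intro j _
          apply mul_le_mul_of_nonneg_left ?_ (hA i j)
          by_cases hj : ζf j = true
          · rw [if_pos hj]
            have := hz_le1 t ht j
            linarith
          · rw [if_neg hj]
            have hj' : ζf j = false := by
              rw [Bool.not_eq_true] at hj; exact hj
            have := hall ⟨j, hj'⟩
            simp only at this
            have h2 := hzs_le j
            linarith
        have step2 : ∑ j, A i j * ((if ζf j then (1:ℝ) else 0) + zs) =
            (∑ j, A i j * (if ζf j then (1:ℝ) else 0)) + zs * (∑ j, A i j) := by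
          rw [Finset.mul_sum, ← Finset.sum_add_distrib]
          apply Finset.sum_congr rfl
          intro j _
          ring
        have step3 := hinact i hfalse
        have step4 : zs * (∑ j, A i j) ≤ zs * anorm :=
          mul_le_mul_of_nonneg_left (hrowle i) hzs0
        linarith
      -- algebraic identities at the barrier
      have hci2 : k * ci^2 = γ * τ i := by
        rw [hci]
        rw [Real.sq_sqrt (div_nonneg (mul_nonneg hγ0.le (hτ i).le) hk0.le)]
        field_simp
      have hcross : Real.sqrt (γ * k * τ i) * ci = γ * τ i := by
        rw [hci, ← Real.sqrt_mul (mul_nonneg (mul_nonneg hγ0.le hk0.le) (hτ i).le)]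
        have : γ * k * τ i * (γ * τ i / k) = (γ * τ i)^2 := by
          field_simp
        rw [this]
        exact Real.sqrt_sq (mul_nonneg hγ0.le (hτ i).le)
      have hsle : μ i * z t i + k * (z t i)^2 + γ * ∑ j, A i j * z t j ≤
          ci - γ * (δgap - anorm * zs) := by
        rw [heq, hμ i]
        have h5 : γ * ∑ j, A i j * z t j ≤ γ * ((τ i - δgap) + zs * anorm) :=
          mul_le_mul_of_nonneg_left hsum hγ0.le
        nlinarith [hcross, hci2]
      -- conclude negativity of the vector field
      have hεγ : 0 < γ * (δgap - anorm * zs) := by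
        apply mul_pos hγ0
        linarith
      have hVt := hVdef t i
      have hsatle := hsat_le (μ i * z t i + k * (z t i)^2 + γ * ∑ j, A i j * z t j)
      rcases le_total (μ i * z t i + k * (z t i)^2 + γ * ∑ j, A i j * z t j) 0 with h | h
      · rw [max_eq_left h] at hsatle
        rw [hVt]
        linarith
      · rw [max_eq_right h] at hsatle
        rw [hVt]
        linarith
  -- conclusion: the two cascade sets coincide
  ext i
  simp only [Set.mem_setOf_eq]
  constructor
  · intro htend
    apply (hcasc i).mpr
    by_contra hzf
    rw [Bool.not_eq_true] at hzf
    have h1 : ∀ᶠ t in atTop, (1:ℝ)/2 < z t i :=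
      htend.eventually (eventually_gt_nhds (by norm_num))
    obtain ⟨t, ht1, ht0⟩ := (h1.and (Filter.eventually_ge_atTop (0:ℝ))).exists
    have h2 := hbar t ht0 ⟨i, hzf⟩
    simp only at h2
    have h3 := hzs_le i
    linarith
  · rintro ⟨t, ht⟩
    exact HF t i ht
end
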